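/- arXiv:2201.04389 — 4 statements merged into one kernel-verified Lean document; each statement's English description precedes it below -/
import Mathlib

section
/- For 0 < a < 1, the function g(c') = c'/2 - sqrt(a) + 2(1-a)/(c' - 2*sqrt(a)) is a right inverse of f on an appropriate domain: if c ≥ 2*sqrt(1-a) and c' = f(c), then g(c') = c. -/
theorem g_right_inverse_of_f (a c : ℝ) (ha0 : 0 < a) (ha1 : a < 1)
    (hc : 2 * Real.sqrt (1 - a) ≤ c) :
    (c - Real.sqrt (c ^ 2 - 4 * (1 - a)) + 2 * Real.sqrt a) / 2 - Real.sqrt a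
      + 2 * (1 - a) / ((c - Real.sqrt (c ^ 2 - 4 * (1 - a)) + 2 * Real.sqrt a)
          - 2 * Real.sqrt a) = c := by
  set s := Real.sqrt (c ^ 2 - 4 * (1 - a)) with hs
  have h1a : 0 < 1 - a := by linarith
  have hsq : 0 < Real.sqrt (1 - a) := Real.sqrt_pos.mpr h1a
  have hcpos : 0 < c := by linarith
  have hnn : 0 ≤ c ^ 2 - 4 * (1 - a) := by
    have : (2 * Real.sqrt (1 - a)) ^ 2 ≤ c ^ 2 := by
      apply pow_le_pow_left₀ (by positivity) hc
    have h2 : (2 * Real.sqrt (1 - a)) ^ 2 = 4 * (1 - a) := by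
      rw [mul_pow, Real.sq_sqrt h1a.le]; ring
    linarith
  have hs2 : s ^ 2 = c ^ 2 - 4 * (1 - a) := Real.sq_sqrt hnn
  have hsnn : 0 ≤ s := Real.sqrt_nonneg _
  have hslt : s < c := by
    have : s ^ 2 < c ^ 2 := by rw [hs2]; linarith
    nlinarith
  have hne : c - s ≠ 0 := by linarith
  have hkey : 2 * (1 - a) / (c - s) = (c + s) / 2 := by
    rw [div_eq_div_iff hne (by norm_num)]
    nlinarith
  rw [show (c - s + 2 * Real.sqrt a) - 2 * Real.sqrt a = c - s by ring, hkey]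
  ring
end

section
/- Suppose 0 < a < 1, c* ∈ [2*sqrt(1-a), 2], and 2 < 2*sqrt(r*d) < f(c*) where f(c) = c - sqrt(c^2-4(1-a)) + 2*sqrt(a). Then the accelerated speed c** := sqrt(r*d) - sqrt(a) + (1-a)/(sqrt(r*d) - sqrt(a)) satisfies c* < c** < 2. -/
set_option maxHeartbeats 1000000

/-- The map `x ↦ x + b/x` is strictly decreasing on `(0, √b]`. -/
lemma aux_anti (b x y : ℝ) (hx : 0 < x) (hxy : x < y) (hy : y ^ 2 ≤ b) :
    y + b / y < x + b / x := by
  have hy0 : 0 < y := hx.trans hxy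
  have hxyb : x * y < b := by nlinarith
  have key : x + b / x - (y + b / y) = (y - x) * (b - x * y) / (x * y) := by
    field_simp
    ring
  have hpos : 0 < (y - x) * (b - x * y) / (x * y) := by
    apply div_pos
    · exact mul_pos (by linarith) (by linarith)
    · exact mul_pos hx hy0
  linarith [key ▸ hpos]

theorem accelerated_speed_between (a r d cstar : ℝ)
    (ha0 : 0 < a) (ha1 : a < 1) (hr : 0 < r) (hd : 0 < d)
    (hc1 : 2 * Real.sqrt (1 - a) ≤ cstar) (hc2 : cstar ≤ 2)
    (hv1 : 2 < 2 * Real.sqrt (r * d))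
    (hv2 : 2 * Real.sqrt (r * d)
      < cstar - Real.sqrt (cstar ^ 2 - 4 * (1 - a)) + 2 * Real.sqrt a) :
    cstar < Real.sqrt (r * d) - Real.sqrt a
        + (1 - a) / (Real.sqrt (r * d) - Real.sqrt a)
    ∧ Real.sqrt (r * d) - Real.sqrt a
        + (1 - a) / (Real.sqrt (r * d) - Real.sqrt a) < 2 := by
  set s := Real.sqrt a with hs_def
  set v := Real.sqrt (r * d) with hv_def
  set w := Real.sqrt (cstar ^ 2 - 4 * (1 - a)) with hw_def
  set u := Real.sqrt (1 - a) with hu_def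
  have hb : (0:ℝ) < 1 - a := by linarith
  have hs0 : 0 ≤ s := Real.sqrt_nonneg a
  have hs2 : s ^ 2 = a := Real.sq_sqrt ha0.le
  have hs1 : s < 1 := by
    rw [hs_def]; rw [show (1:ℝ) = Real.sqrt 1 by simp]
    exact Real.sqrt_lt_sqrt ha0.le ha1
  have hu0 : 0 < u := Real.sqrt_pos.mpr hb
  have hu2 : u ^ 2 = 1 - a := Real.sq_sqrt hb.le
  have hv1' : 1 < v := by linarith
  have hc0 : 0 < cstar := by nlinarith
  have hD : 0 ≤ cstar ^ 2 - 4 * (1 - a) := by nlinarith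
  have hw0 : 0 ≤ w := Real.sqrt_nonneg _
  have hw2 : w ^ 2 = cstar ^ 2 - 4 * (1 - a) := Real.sq_sqrt hD
  have hwlt : w < cstar := by nlinarith
  -- λ = (cstar - w)/2
  set l := (cstar - w) / 2 with hl_def
  have hl0 : 0 < l := by simp [hl_def]; linarith
  have hleq : l ^ 2 - cstar * l + (1 - a) = 0 := by
    have : l ^ 2 = (cstar ^ 2 - 2 * cstar * w + w ^ 2) / 4 := by rw [hl_def]; ring
    rw [this, hw2]; ring
  have hlamb : l + (1 - a) / l = cstar := by
    field_simp
    nlinarith [hleq]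
  have hcu : 2 * u ≤ cstar := hc1
  have hlb : l ^ 2 ≤ 1 - a := by
    -- l ≤ √(1-a) equivalent: cstar - 2u ≤ w
    have h1 : cstar - 2 * u ≤ w := by
      have h2 : (cstar - 2 * u) ^ 2 ≤ w ^ 2 := by
        rw [hw2]
        nlinarith [mul_le_mul_of_nonneg_left hcu hu0.le, hu2]
      nlinarith [hw0, sq_nonneg (w - (cstar - 2 * u)), sq_nonneg (w + (cstar - 2 * u))]
    have h3 : 0 < cstar - w := by linarith
    have h4 : (cstar - w) ^ 2 ≤ (2 * u) ^ 2 := by nlinarith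
    have : l ^ 2 = (cstar - w) ^ 2 / 4 := by rw [hl_def]; ring
    rw [this]
    nlinarith [hu2]
  -- m = v - s
  set m := v - s with hm_def
  have hm1 : 1 - s < m := by simp [hm_def]; linarith
  have hm0 : 0 < m := by linarith
  have hml : m < l := by simp [hm_def, hl_def]; linarith
  constructor
  · have := aux_anti (1 - a) m l hm0 hml hlb
    linarith [hlamb]
  · have h2 : l ^ 2 ≤ 1 - a := hlb
    have hmb : m ^ 2 ≤ 1 - a := by nlinarith
    have := aux_anti (1 - a) (1 - s) m (by linarith) hm1 hmb
    have hval : (1 - s) + (1 - a) / (1 - s) = 2 := by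
      have : (1:ℝ) - a = (1 - s) * (1 + s) := by nlinarith
      rw [this, mul_div_cancel_left₀ _ (by linarith : (1:ℝ) - s ≠ 0)]
      ring
    linarith
end

section
/- Let 0 < a < 1 and c ≥ 2*sqrt(1-a). Set λ(c) = (c - sqrt(c^2 - 4(1-a)))/2. For c' ≥ max{c, f(c)} with f(c) = c - sqrt(c^2-4(1-a)) + 2*sqrt(a), the discriminant c'^2 - 4*λ(c)*(c'-c) - 4 is nonnegative; that is, the quadratic Λ^2 - c'Λ + (1 + λ(c)(c'-c)) = 0 has a real root. -/
theorem discriminant_nonneg (a c c' : ℝ) (ha0 : 0 < a) (ha1 : a < 1)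
    (hc : 2 * Real.sqrt (1 - a) ≤ c) (hcc : c ≤ c')
    (hfc : c - Real.sqrt (c ^ 2 - 4 * (1 - a)) + 2 * Real.sqrt a ≤ c') :
    c' ^ 2 - 4 * ((c - Real.sqrt (c ^ 2 - 4 * (1 - a))) / 2) * (c' - c) - 4 ≥ 0 := by
  have h1a : (0:ℝ) ≤ 1 - a := by linarith
  have hsa : Real.sqrt a ^ 2 = a := Real.sq_sqrt ha0.le
  have hq : Real.sqrt (1 - a) ^ 2 = 1 - a := Real.sq_sqrt h1a
  have hc2 : 0 ≤ c ^ 2 - 4 * (1 - a) := by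
    nlinarith [Real.sqrt_nonneg (1 - a)]
  have hs : Real.sqrt (c ^ 2 - 4 * (1 - a)) ^ 2 = c ^ 2 - 4 * (1 - a) :=
    Real.sq_sqrt hc2
  nlinarith [Real.sqrt_nonneg a, mul_nonneg (Real.sqrt_nonneg a)
    (sub_nonneg.mpr hfc), sq_nonneg (c' - (c - Real.sqrt (c ^ 2 - 4 * (1 - a)))
    - 2 * Real.sqrt a)]
end

section
/- Let 0 < a < 1 < b and r, d > 0. If (d+2)(1-a) + r < rb(1 - 2(1-a)), then the condition for nonlinear selection (Alhasanat–Ou) is incompatible with the Lewis–Li–Weinberger linear determinacy condition r(ab-1) ≤ (2-d)(1-a) when 0 < d < 2; i.e., both cannot hold simultaneously. -/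
theorem nonlinear_incompatible_linear (a b r d : ℝ)
    (ha0 : 0 < a) (ha1 : a < 1) (hb : 1 < b) (hr : 0 < r)
    (hd0 : 0 < d) (hd2 : d < 2) :
    ¬ ((d + 2) * (1 - a) + r < r * b * (1 - 2 * (1 - a))
        ∧ r * (a * b - 1) ≤ (2 - d) * (1 - a)) := by
  rintro ⟨h1, h2⟩
  nlinarith [mul_pos hr (mul_pos (sub_pos.2 hb) (sub_pos.2 ha1)), mul_pos hd0 (sub_pos.2 ha1)]
end
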